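/- arXiv:2308.16002 — 2 statements merged into one kernel-verified Lean document; each statement's English description precedes it below -/
import Mathlib

section
/- Fix an integer n ≥ 2. Consider the following model of a two-child family: the sexes (s₁,s₂) ∈ Bool × Bool are uniform and independent (true = boy); independently, a pair of names (m₁,m₂) is chosen with m₁ uniform on Fin n and, given m₁, m₂ uniform on the n−1 elements of Fin n different from m₁. Say child i 'is a boy named Adam' if sᵢ = true and mᵢ = 0, where 0 ∈ Fin n is the name 'Adam' (the name mᵢ of child i is only regarded as meaningful when sᵢ = true; a child with sᵢ = false is a girl regardless of mᵢ). Then the conditional probability that both children are boys, given that at least one child is a boy named Adam, equals exactly 1/2. -/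
open MeasureTheory ProbabilityTheory ENNReal

/-- The fair Bernoulli measure on `Bool` (the law of a child's sex,
`true` = boy). -/
noncomputable def fairBool : Measure Bool :=
  (2 : ℝ≥0∞)⁻¹ • Measure.dirac true + (2 : ℝ≥0∞)⁻¹ • Measure.dirac false

/-- The law of the pair of names `(m₁, m₂)`: `m₁` is uniform on `Fin n`
and, given `m₁`, `m₂` is uniform on the `n - 1` names different from
`m₁`.  Each ordered pair `(i, j)` with `i ≠ j` has probability
`1 / (n * (n - 1))`. -/
noncomputable def namePairLaw (n : ℕ) : Measure (Fin n × Fin n) :=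
  ∑ i : Fin n, ∑ j : Fin n,
    (if i = j then 0 else ((n : ℝ≥0∞) * ((n - 1 : ℕ) : ℝ≥0∞))⁻¹) • Measure.dirac (i, j)

lemma namePairLaw_apply (n : ℕ) (S : Set (Fin n × Fin n)) :
    namePairLaw n S = ∑ i : Fin n, ∑ j : Fin n,
      (if i = j then 0 else ((n : ℝ≥0∞) * ((n - 1 : ℕ) : ℝ≥0∞))⁻¹) * S.indicator 1 (i, j) := by
  simp only [namePairLaw, Measure.finset_sum_apply,
    apply_ite (fun μ : Measure (Fin n × Fin n) => μ S), Measure.smul_apply,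
    Measure.dirac_apply, Measure.coe_zero, Pi.zero_apply, smul_eq_mul, ite_mul, zero_mul]

lemma card_ne (n : ℕ) (z : Fin n) :
    (Finset.filter (fun x => ¬z = x) (Finset.univ : Finset (Fin n))).card = n - 1 := by
  have h : Finset.filter (fun x => ¬z = x) (Finset.univ : Finset (Fin n))
      = Finset.univ.erase z := by
    ext x; simp [eq_comm, Ne]
  rw [h, Finset.card_erase_of_mem (Finset.mem_univ z), Finset.card_univ, Fintype.card_fin]

lemma fairBool_true : fairBool {true} = 2⁻¹ := by
  simp [fairBool, Measure.dirac_apply' _ (Set.toFinite {true}).measurableSet]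

lemma fairBool_univ : fairBool Set.univ = 1 := by
  simp [fairBool]
  rw [← two_mul, ENNReal.mul_inv_cancel (by norm_num) (by norm_num)]

lemma key_cast (n : ℕ) (hn : 2 ≤ n) :
    ((n - 1 : ℕ) : ℝ≥0∞) * ((n : ℝ≥0∞) * ((n - 1 : ℕ) : ℝ≥0∞))⁻¹ = (n : ℝ≥0∞)⁻¹ := by
  have h1 : ((n - 1 : ℕ) : ℝ≥0∞) ≠ 0 := by
    simp only [ne_eq, Nat.cast_eq_zero]; omega
  rw [ENNReal.mul_inv (Or.inl (by simp; omega)) (Or.inl (ENNReal.natCast_ne_top n)),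
    ← mul_assoc, mul_comm ((n - 1 : ℕ) : ℝ≥0∞),
    mul_assoc, ENNReal.mul_inv_cancel h1 (ENNReal.natCast_ne_top _), mul_one]

lemma innerSumW (n : ℕ) (hn : 2 ≤ n) (i : Fin n) :
    ∑ j : Fin n, (if i = j then (0:ℝ≥0∞) else ((n : ℝ≥0∞) * ((n - 1 : ℕ) : ℝ≥0∞))⁻¹)
      = (n : ℝ≥0∞)⁻¹ := by
  rw [Finset.sum_ite, Finset.sum_const, Finset.sum_const, card_ne, smul_zero, zero_add,
    nsmul_eq_mul, key_cast n hn]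

lemma name1 (n : ℕ) (hn : 2 ≤ n) (z : Fin n) :
    namePairLaw n {m : Fin n × Fin n | m.1 = z} = (n : ℝ≥0∞)⁻¹ := by
  rw [namePairLaw_apply]
  simp only [Set.indicator_apply, Set.mem_setOf_eq, mul_ite, mul_one, mul_zero, Pi.one_apply]
  rw [Finset.sum_comm]
  simp only [Finset.sum_ite_eq', Finset.mem_univ, if_true]
  rw [Finset.sum_ite, Finset.sum_const, Finset.sum_const, card_ne, smul_zero, zero_add,
    nsmul_eq_mul, key_cast n hn]

lemma name2 (n : ℕ) (hn : 2 ≤ n) (z : Fin n) :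
    namePairLaw n {m : Fin n × Fin n | m.2 = z} = (n : ℝ≥0∞)⁻¹ := by
  rw [namePairLaw_apply]
  simp only [Set.indicator_apply, Set.mem_setOf_eq, mul_ite, mul_one, mul_zero, Pi.one_apply]
  simp only [Finset.sum_ite_eq', Finset.mem_univ, if_true]
  have : ∀ i : Fin n, (if i = z then (0:ℝ≥0∞) else ((n : ℝ≥0∞) * ((n - 1 : ℕ) : ℝ≥0∞))⁻¹)
      = if z = i then 0 else ((n : ℝ≥0∞) * ((n - 1 : ℕ) : ℝ≥0∞))⁻¹ := by
    intro i; simp [eq_comm]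
  simp only [this]
  rw [Finset.sum_ite, Finset.sum_const, Finset.sum_const, card_ne, smul_zero, zero_add,
    nsmul_eq_mul, key_cast n hn]

lemma name_and (n : ℕ) (z : Fin n) :
    namePairLaw n ({m : Fin n × Fin n | m.1 = z} ∩ {m | m.2 = z}) = 0 := by
  rw [namePairLaw_apply]
  refine Finset.sum_eq_zero fun i _ => Finset.sum_eq_zero fun j _ => ?_
  simp only [Set.indicator_apply, Set.mem_inter_iff, Set.mem_setOf_eq]
  split_ifs with h1 h2 <;> simp_all

lemma name_or (n : ℕ) (hn : 2 ≤ n) (z : Fin n) :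
    namePairLaw n ({m : Fin n × Fin n | m.1 = z} ∪ {m | m.2 = z}) = 2 * (n : ℝ≥0∞)⁻¹ := by
  have h := measure_union_add_inter (μ := namePairLaw n)
    {m : Fin n × Fin n | m.1 = z} (Set.toFinite {m : Fin n × Fin n | m.2 = z}).measurableSet
  rw [name_and, add_zero, name1 n hn, name2 n hn] at h
  rw [h, two_mul]

lemma namePairLaw_univ (n : ℕ) (hn : 2 ≤ n) : namePairLaw n Set.univ = 1 := by
  rw [namePairLaw_apply]
  have : ∀ i : Fin n, ∑ j : Fin n,
      (if i = j then (0:ℝ≥0∞) else ((n : ℝ≥0∞) * ((n - 1 : ℕ) : ℝ≥0∞))⁻¹)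
        * Set.indicator Set.univ 1 (i, j) = (n : ℝ≥0∞)⁻¹ := by
    intro i
    simp only [Set.indicator_univ, Pi.one_apply, mul_one]
    exact innerSumW n hn i
  rw [Finset.sum_congr rfl fun i _ => this i, Finset.sum_const, Finset.card_univ,
    Fintype.card_fin, nsmul_eq_mul,
    ENNReal.mul_inv_cancel (by simp; omega) (ENNReal.natCast_ne_top _)]

instance : IsProbabilityMeasure fairBool := ⟨fairBool_univ⟩

lemma two_inv_two : (2 : ℝ≥0∞)⁻¹ * 2 = 1 := ENNReal.inv_mul_cancel (by norm_num) (by norm_num)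

/-- **Adam puzzle with distinct names.** Sexes `(s₁, s₂)` are uniform on
`Bool × Bool` (`true` = boy); independently, the name pair `(m₁, m₂)` has
law `namePairLaw n` (first name uniform, second uniform among the
remaining `n - 1` names).  Name `0 : Fin n` is "Adam"; child `i` is a boy
named Adam iff `sᵢ = true` and `mᵢ = 0`.  Given at least one boy named
Adam, the probability of two boys is exactly `1/2`. -/
theorem adam_puzzle_distinct_names (n : ℕ) (hn : 2 ≤ n) :
    ((fairBool.prod fairBool).prod (namePairLaw n))[{ω : (Bool × Bool) × (Fin n × Fin n) |
        ω.1.1 = true ∧ ω.1.2 = true} |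
      {ω : (Bool × Bool) × (Fin n × Fin n) |
        (ω.1.1 = true ∧ ω.2.1 = (⟨0, by omega⟩ : Fin n)) ∨
        (ω.1.2 = true ∧ ω.2.2 = (⟨0, by omega⟩ : Fin n))}] = 1 / 2 := by
  haveI hprob : IsProbabilityMeasure (namePairLaw n) := ⟨namePairLaw_univ n hn⟩
  set z : Fin n := ⟨0, by omega⟩ with hz
  set E : Set ((Bool × Bool) × (Fin n × Fin n)) := {ω | ω.1.1 = true ∧ ω.1.2 = true} with hE
  set F : Set ((Bool × Bool) × (Fin n × Fin n)) :=
    {ω | (ω.1.1 = true ∧ ω.2.1 = z) ∨ (ω.1.2 = true ∧ ω.2.2 = z)} with hF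
  have h2 : fairBool.prod fairBool {s : Bool × Bool | s.1 = true} = 2⁻¹ := by
    have heq : {s : Bool × Bool | s.1 = true} = ({true} : Set Bool) ×ˢ Set.univ := by
      ext ⟨a, b⟩; simp [Set.mem_prod]
    rw [heq, Measure.prod_prod, fairBool_true, fairBool_univ, mul_one]
  have h2' : fairBool.prod fairBool {s : Bool × Bool | s.2 = true} = 2⁻¹ := by
    have heq : {s : Bool × Bool | s.2 = true} = (Set.univ : Set Bool) ×ˢ {true} := by
      ext ⟨a, b⟩; simp [Set.mem_prod]
    rw [heq, Measure.prod_prod, fairBool_true, fairBool_univ, one_mul]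
  have h4 : fairBool.prod fairBool {s : Bool × Bool | s.1 = true ∧ s.2 = true}
      = 2⁻¹ * 2⁻¹ := by
    have heq : {s : Bool × Bool | s.1 = true ∧ s.2 = true}
        = ({true} : Set Bool) ×ˢ ({true} : Set Bool) := by
      ext ⟨a, b⟩; simp [Set.mem_prod]
    rw [heq, Measure.prod_prod, fairBool_true]
  have hFval : ((fairBool.prod fairBool).prod (namePairLaw n)) F = (n : ℝ≥0∞)⁻¹ := by
    have hFeq : F = ({s : Bool × Bool | s.1 = true} ×ˢ {m : Fin n × Fin n | m.1 = z})
        ∪ ({s : Bool × Bool | s.2 = true} ×ˢ {m : Fin n × Fin n | m.2 = z}) := by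
      ext ω; simp [hF, Set.mem_prod]
    have hint : ({s : Bool × Bool | s.1 = true} ×ˢ {m : Fin n × Fin n | m.1 = z})
        ∩ ({s : Bool × Bool | s.2 = true} ×ˢ {m : Fin n × Fin n | m.2 = z})
        = {s : Bool × Bool | s.1 = true ∧ s.2 = true}
          ×ˢ ({m : Fin n × Fin n | m.1 = z} ∩ {m | m.2 = z}) := by
      ext ω; simp [Set.mem_prod]; tauto
    have h := measure_union_add_inter (μ := (fairBool.prod fairBool).prod (namePairLaw n))
      ({s : Bool × Bool | s.1 = true} ×ˢ {m : Fin n × Fin n | m.1 = z})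
      (Set.toFinite (({s : Bool × Bool | s.2 = true}
        ×ˢ {m : Fin n × Fin n | m.2 = z}))).measurableSet
    rw [hint, Measure.prod_prod, Measure.prod_prod, Measure.prod_prod,
      name_and, mul_zero, add_zero, name1 n hn, name2 n hn, h2, h2'] at h
    rw [hFeq, h, ← two_mul,
      show (2:ℝ≥0∞) * (2⁻¹ * (n:ℝ≥0∞)⁻¹) = (2⁻¹ * 2) * (n:ℝ≥0∞)⁻¹ by ring,
      two_inv_two, one_mul]
  have hFEval : ((fairBool.prod fairBool).prod (namePairLaw n)) (F ∩ E)
      = 2⁻¹ * (n : ℝ≥0∞)⁻¹ := by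
    have hFEeq : F ∩ E = {s : Bool × Bool | s.1 = true ∧ s.2 = true}
        ×ˢ ({m : Fin n × Fin n | m.1 = z} ∪ {m | m.2 = z}) := by
      ext ω; simp [hF, hE, Set.mem_prod]; tauto
    rw [hFEeq, Measure.prod_prod, h4, name_or n hn,
      show (2:ℝ≥0∞)⁻¹ * 2⁻¹ * (2 * (n:ℝ≥0∞)⁻¹) = (2⁻¹ * 2) * (2⁻¹ * (n:ℝ≥0∞)⁻¹) by ring,
      two_inv_two, one_mul]
  rw [cond_apply (Set.toFinite F).measurableSet, hFval, hFEval, inv_inv,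
    show (n:ℝ≥0∞) * (2⁻¹ * (n:ℝ≥0∞)⁻¹) = ((n:ℝ≥0∞) * (n:ℝ≥0∞)⁻¹) * 2⁻¹ by ring,
    ENNReal.mul_inv_cancel (by simp; omega) (ENNReal.natCast_ne_top _), one_mul, one_div]
end

section
/- Fix p ∈ (0,1]. Model each of two children independently as a pair (s,a) ∈ Bool × Bool with s uniform (s = true meaning boy) and a a Bernoulli(p) indicator independent of s (a = true meaning the child is assigned the name Adam). Then the conditional probability that both children are boys, given that the family has at least one boy and its first-born boy (the child with smallest index having s = true) has a = true, equals 1/3. -/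
open MeasureTheory ProbabilityTheory ENNReal

/-- The Bernoulli(p) measure on `Bool` (the law of the name-Adam
indicator). -/
noncomputable def bern (p : ℝ≥0∞) : Measure Bool :=
  p • Measure.dirac true + (1 - p) • Measure.dirac false

/-- The law of one child: a pair `(s, a)` with `s` uniform on `Bool`
(`true` = boy) and `a` an independent Bernoulli(p) indicator
(`true` = named Adam). -/
noncomputable def childLaw (p : ℝ≥0∞) : Measure (Bool × Bool) :=
  fairBool.prod (bern p)

instance : SFinite fairBool := by unfold fairBool; infer_instance
instance (p : ℝ≥0∞) : SFinite (bern p) := by unfold bern; infer_instance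
instance (p : ℝ≥0∞) : SFinite (childLaw p) := by unfold childLaw; infer_instance

lemma bern_univ (p : ℝ≥0∞) (h : p ≤ 1) : bern p Set.univ = 1 := by
  simp [bern, Measure.dirac_apply]
  rw [add_comm, tsub_add_cancel_of_le h]

lemma bern_true (p : ℝ≥0∞) : bern p {true} = p := by
  simp [bern, Measure.dirac_apply]

lemma fairBool_single (b : Bool) : fairBool {b} = 2⁻¹ := by
  cases b <;> simp [fairBool, Measure.dirac_apply]

lemma childLaw_tt (p : ℝ≥0∞) : childLaw p {(true, true)} = 2⁻¹ * p := by
  have : ({(true,true)} : Set (Bool×Bool)) = {true} ×ˢ {true} := by simp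
  rw [childLaw, this, Measure.prod_prod, fairBool_single, bern_true]

lemma childLaw_univ (p : ℝ≥0∞) (h : p ≤ 1) : childLaw p Set.univ = 1 := by
  rw [childLaw, ← Set.univ_prod_univ, Measure.prod_prod, fairBool_univ, bern_univ p h, one_mul]

lemma childLaw_fst_false (p : ℝ≥0∞) (h : p ≤ 1) :
    childLaw p ({false} ×ˢ Set.univ) = 2⁻¹ := by
  rw [childLaw, Measure.prod_prod, fairBool_single, bern_univ p h, mul_one]

/-- **First-born boy named Adam.** Two independent children, each a pair
`(s, a)` with `s` uniform (`true` = boy) and `a` Bernoulli(p) (`true` =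
named Adam).  Given that the family has at least one boy and its
first-born boy (child 1 if `s₁ = true`, otherwise child 2) is named
Adam, the probability of two boys is `1/3`. -/
theorem first_born_boy_named_adam (p : ℝ≥0∞) (hp0 : 0 < p) (hp1 : p ≤ 1) :
    ((childLaw p).prod (childLaw p))[{ω : (Bool × Bool) × (Bool × Bool) |
        ω.1.1 = true ∧ ω.2.1 = true} |
      {ω : (Bool × Bool) × (Bool × Bool) |
        (ω.1.1 = true ∨ ω.2.1 = true) ∧
        (if ω.1.1 = true then ω.1.2 else ω.2.2) = true}] = 1 / 3 := by
  set μ := (childLaw p).prod (childLaw p) with hμ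
  set F : Set ((Bool × Bool) × (Bool × Bool)) := {ω |
        (ω.1.1 = true ∨ ω.2.1 = true) ∧
        (if ω.1.1 = true then ω.1.2 else ω.2.2) = true} with hF
  set E : Set ((Bool × Bool) × (Bool × Bool)) := {ω | ω.1.1 = true ∧ ω.2.1 = true} with hE
  have hFm : MeasurableSet F := (Set.to_countable F).measurableSet
  have hFE : F ∩ E = ({(true,true)} : Set (Bool × Bool)) ×ˢ ({true} ×ˢ Set.univ) := by
    ext ⟨⟨s1, a1⟩, ⟨s2, a2⟩⟩
    cases s1 <;> cases a1 <;> cases s2 <;> cases a2 <;>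
      simp [hF, hE, Set.mem_prod]
  have hFdec : F = (({(true,true)} : Set (Bool × Bool)) ×ˢ (Set.univ : Set (Bool × Bool))) ∪
      (({false} ×ˢ (Set.univ : Set Bool)) ×ˢ ({(true,true)} : Set (Bool × Bool))) := by
    ext ⟨⟨s1, a1⟩, ⟨s2, a2⟩⟩
    cases s1 <;> cases a1 <;> cases s2 <;> cases a2 <;>
      simp [hF, Set.mem_prod]
  have hdisj : Disjoint (({(true,true)} : Set (Bool × Bool)) ×ˢ (Set.univ : Set (Bool × Bool)))
      (({false} ×ˢ (Set.univ : Set Bool)) ×ˢ ({(true,true)} : Set (Bool × Bool))) := by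
    rw [Set.disjoint_left]
    rintro ⟨⟨s1, a1⟩, ⟨s2, a2⟩⟩ h1 h2
    cases s1 <;> simp [Set.mem_prod] at h1 h2
  have hμF : μ F = 2⁻¹ * p * 1 + 2⁻¹ * (2⁻¹ * p) := by
    rw [hFdec, measure_union hdisj ((Set.to_countable _).measurableSet), hμ,
      Measure.prod_prod, Measure.prod_prod, childLaw_tt, childLaw_univ p hp1,
      childLaw_fst_false p hp1]
  have hμFE : μ (F ∩ E) = 2⁻¹ * p * (2⁻¹ * 1) := by
    rw [hFE, hμ, Measure.prod_prod, childLaw_tt]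
    congr 1
    have : ({true} ×ˢ Set.univ : Set (Bool × Bool)) = {true} ×ˢ (Set.univ : Set Bool) := rfl
    rw [childLaw, Measure.prod_prod, fairBool_single, bern_univ p hp1]
  rw [ProbabilityTheory.cond_apply hFm, hμF, hμFE]
  -- arithmetic
  have h0 : p ≠ 0 := hp0.ne'
  have ht : p ≠ ⊤ := (lt_of_le_of_lt hp1 (by norm_num)).ne
  have h2 : (1:ℝ≥0∞) + 2⁻¹ = 3 * 2⁻¹ := by
    calc (1:ℝ≥0∞) + 2⁻¹ = 2 * 2⁻¹ + 1 * 2⁻¹ := by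
          rw [ENNReal.mul_inv_cancel (by norm_num) (by norm_num), one_mul]
      _ = (2 + 1) * 2⁻¹ := by ring
      _ = 3 * 2⁻¹ := by norm_num
  have e1 : (2:ℝ≥0∞)⁻¹ * p * 1 + 2⁻¹ * (2⁻¹ * p) = 3 * (2⁻¹ * p * (2⁻¹ * 1)) := by
    calc (2:ℝ≥0∞)⁻¹ * p * 1 + 2⁻¹ * (2⁻¹ * p) = (1 + 2⁻¹) * (2⁻¹ * p) := by ring
      _ = 3 * 2⁻¹ * (2⁻¹ * p) := by rw [h2]
      _ = 3 * (2⁻¹ * p * (2⁻¹ * 1)) := by ring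
  rw [e1]
  set y := (2:ℝ≥0∞)⁻¹ * p * (2⁻¹ * 1) with hy
  have h2i0 : (2:ℝ≥0∞)⁻¹ ≠ 0 := by simp
  have h2it : (2:ℝ≥0∞)⁻¹ ≠ ⊤ := by simp
  have hy0 : y ≠ 0 := by
    rw [hy, mul_one]
    exact mul_ne_zero (mul_ne_zero h2i0 h0) h2i0
  have hyt : y ≠ ⊤ := by
    rw [hy, mul_one]
    exact ENNReal.mul_ne_top (ENNReal.mul_ne_top h2it ht) h2it
  rw [ENNReal.mul_inv (Or.inl (by norm_num)) (Or.inl (by norm_num)), mul_assoc,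
    ENNReal.inv_mul_cancel hy0 hyt, mul_one, one_div]
end
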